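/- Let U ⊆ ℝ² be a connected open set, Γ a torsion-free affine connection on U with projective Schouten tensor P, Υ a smooth one-form on U, Γ̂^k_{ij} = Γ^k_{ij} + δ^k_i Υ_j + δ^k_j Υ_i, and P̂ the projective Schouten tensor of Γ̂. On M = U×ℝ² with coordinates (x¹,x²,ξ₁,ξ₂) define the 2-form Ω by Ω(∂_{ξ_i},∂_{x^j}) = δ_{ij} = −Ω(∂_{x^j},∂_{ξ_i}), Ω(∂_{x^1},∂_{x^2}) = P_{12} − P_{21}, and all other components zero (this is Ω = dξ_i∧dx^i + P_{ij}dx^i∧dx^j), and define Ω̂ by the same formulas with P̂ in place of P. Then the diffeomorphism Φ(x,ξ) = (x, ξ + Υ(x)) pulls Ω̂ back to Ω: for every p ∈ U×ℝ², (DΦ(p))ᵀ · Ω̂(Φ(p)) · DΦ(p) = Ω(p), where the 2-forms are viewed as antisymmetric 4×4 matrix-valued functions. In other words, the charged symplectic form does not depend on the choice of connection in the projective class. -/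

import Mathlib

noncomputable section
open Matrix

/-- Points of the plane. -/
abbrev Pt2 : Type := Fin 2 → ℝ
/-- Points of the 4-manifold `U × ℝ²`, coordinates `(x¹, x², ξ₁, ξ₂)`. -/
abbrev Pt4 : Type := Fin 4 → ℝ

/-- Partial derivative of a function on the plane. -/
def pd2 (i : Fin 2) (f : Pt2 → ℝ) (x : Pt2) : ℝ := fderiv ℝ f x (Pi.single i 1)

/-- Base point `(x¹,x²)` of a point of `U × ℝ²`. -/
def bpt (p : Pt4) : Pt2 := ![p 0, p 1]

/-- An affine connection: `conn k i j` is the Christoffel symbol `Γ^k_{ij}`. -/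
abbrev Conn : Type := Fin 2 → Fin 2 → Fin 2 → Pt2 → ℝ

/-- Curvature `R_{ij}{}^k{}_l` of a connection. -/
def curv (Γ : Conn) (i j k l : Fin 2) (x : Pt2) : ℝ :=
  pd2 i (Γ k j l) x - pd2 j (Γ k i l) x
    + ∑ m, (Γ k i m x * Γ m j l x - Γ k j m x * Γ m i l x)

/-- Ricci tensor `R_{jl} = R_{kj}{}^k{}_l`. -/
def ricciT (Γ : Conn) (j l : Fin 2) (x : Pt2) : ℝ := ∑ k, curv Γ k j k l x

/-- Projective Schouten tensor `P_{ij} = R_{(ij)} + (1/3) R_{[ij]}`. -/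
def schouten (Γ : Conn) (i j : Fin 2) (x : Pt2) : ℝ :=
  (ricciT Γ i j x + ricciT Γ j i x) / 2 + (ricciT Γ i j x - ricciT Γ j i x) / 6

/-- The projectively changed connection `Γ̂^k_{ij} = Γ^k_{ij} + δ^k_i Υ_j + δ^k_j Υ_i`. -/
def projChange (Γ : Conn) (Υ : Fin 2 → Pt2 → ℝ) : Conn :=
  fun k i j x => Γ k i j x + (if k = i then Υ j x else 0) + (if k = j then Υ i x else 0)

/-- The charged symplectic form `Ω = dξ_i∧dx^i + P_{ij} dx^i∧dx^j` of a connection `Γ`,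
as an antisymmetric `4×4` matrix in the coordinates `(x¹,x²,ξ₁,ξ₂)`:
`Ω(∂_{ξ_i},∂_{x^j}) = δ_{ij} = −Ω(∂_{x^j},∂_{ξ_i})`, `Ω(∂_{x^1},∂_{x^2}) = P_{12} − P_{21}`,
all other components zero. -/
def chargedSymp (Γ : Conn) (p : Pt4) : Matrix (Fin 4) (Fin 4) ℝ :=
  let q : ℝ := schouten Γ 0 1 (bpt p) - schouten Γ 1 0 (bpt p)
  !![0, q, -1, 0;
     -q, 0, 0, -1;
     1, 0, 0, 0;
     0, 1, 0, 0]

/-- The diffeomorphism `Φ(x,ξ) = (x, ξ + Υ(x))`. -/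
def transl (Υ : Fin 2 → Pt2 → ℝ) (p : Pt4) : Pt4 :=
  ![p 0, p 1, p 2 + Υ 0 (bpt p), p 3 + Υ 1 (bpt p)]

/-- The Jacobian matrix `DΦ` of `Φ(x,ξ) = (x, ξ + Υ(x))`, in coordinates `(x¹,x²,ξ₁,ξ₂)`. -/
def translD (Υ : Fin 2 → Pt2 → ℝ) (p : Pt4) : Matrix (Fin 4) (Fin 4) ℝ :=
  !![1, 0, 0, 0;
     0, 1, 0, 0;
     pd2 0 (Υ 0) (bpt p), pd2 1 (Υ 0) (bpt p), 1, 0;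
     pd2 0 (Υ 1) (bpt p), pd2 1 (Υ 1) (bpt p), 0, 1]

lemma pd2_add' (i : Fin 2) (F f g : Pt2 → ℝ) (x : Pt2) (hF : F = fun y => f y + g y)
    (hf : DifferentiableAt ℝ f x) (hg : DifferentiableAt ℝ g x) :
    pd2 i F x = pd2 i f x + pd2 i g x := by
  subst hF; simp [pd2, fderiv_fun_add hf hg]

lemma pd2_projChange (Γ : Conn) (Υ : Fin 2 → Pt2 → ℝ) (i k a b : Fin 2) (x : Pt2)
    (hΓ : DifferentiableAt ℝ (Γ k a b) x) (hb : DifferentiableAt ℝ (Υ b) x)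
    (ha : DifferentiableAt ℝ (Υ a) x) :
    pd2 i (projChange Γ Υ k a b) x
      = pd2 i (Γ k a b) x + (if k = a then pd2 i (Υ b) x else 0)
        + (if k = b then pd2 i (Υ a) x else 0) := by
  rcases eq_or_ne k a with h1 | h1 <;> rcases eq_or_ne k b with h2 | h2
  · rw [pd2_add' i _ (Γ k a b) (fun y => Υ b y + Υ a y) x
        (by funext y; simp only [projChange, if_pos h1, if_pos h2]; ring) hΓ (hb.add ha),
      pd2_add' i _ (Υ b) (Υ a) x rfl hb ha, if_pos h1, if_pos h2]
    ring
  · rw [pd2_add' i _ (Γ k a b) (Υ b) x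
        (by funext y; simp only [projChange, if_pos h1, if_neg h2]; ring) hΓ hb,
      if_pos h1, if_neg h2]
    ring
  · rw [pd2_add' i _ (Γ k a b) (Υ a) x
        (by funext y; simp only [projChange, if_neg h1, if_pos h2]; ring) hΓ ha,
      if_neg h1, if_pos h2]
    ring
  · rw [show projChange Γ Υ k a b = Γ k a b by
        funext y; simp only [projChange, if_neg h1, if_neg h2]; ring,
      if_neg h1, if_neg h2]
    ring

/-- The charged symplectic form does not depend on the choice of connection in the
projective class: `Φ(x,ξ) = (x, ξ + Υ(x))` pulls back the form of the projectively
changed connection to the form of the original connection. -/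
theorem chargedSymp_projective_invariance
    (U : Set Pt2) (hUopen : IsOpen U) (hUconn : IsConnected U)
    (Γ : Conn) (hΓsmooth : ∀ k i j, ContDiffOn ℝ (⊤ : ℕ∞) (Γ k i j) U)
    (hΓsym : ∀ k i j, ∀ x ∈ U, Γ k i j x = Γ k j i x)
    (Υ : Fin 2 → Pt2 → ℝ) (hΥsmooth : ∀ i, ContDiffOn ℝ (⊤ : ℕ∞) (Υ i) U)
    (p : Pt4) (hp : bpt p ∈ U) :
    (translD Υ p)ᵀ * chargedSymp (projChange Γ Υ) (transl Υ p) * translD Υ p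
      = chargedSymp Γ p := by
  classical
  have hmem : U ∈ nhds (bpt p) := hUopen.mem_nhds hp
  have hd : ∀ k a b : Fin 2, DifferentiableAt ℝ (Γ k a b) (bpt p) := fun k a b =>
    (((hΓsmooth k a b).contDiffAt hmem).differentiableAt (by simp))
  have hu : ∀ i : Fin 2, DifferentiableAt ℝ (Υ i) (bpt p) := fun i =>
    (((hΥsmooth i).contDiffAt hmem).differentiableAt (by simp))
  have hpd : ∀ i k a b : Fin 2, pd2 i (projChange Γ Υ k a b) (bpt p)
      = pd2 i (Γ k a b) (bpt p) + (if k = a then pd2 i (Υ b) (bpt p) else 0)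
        + (if k = b then pd2 i (Υ a) (bpt p) else 0) :=
    fun i k a b => pd2_projChange Γ Υ i k a b (bpt p) (hd k a b) (hu b) (hu a)
  have hb : bpt (transl Υ p) = bpt p := by
    funext i; fin_cases i <;> rfl
  have key : schouten (projChange Γ Υ) 0 1 (bpt p) - schouten (projChange Γ Υ) 1 0 (bpt p)
      = schouten Γ 0 1 (bpt p) - schouten Γ 1 0 (bpt p)
        + (pd2 1 (Υ 0) (bpt p) - pd2 0 (Υ 1) (bpt p)) := by
    simp only [schouten, ricciT, curv, Fin.sum_univ_two, hpd, projChange]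
    norm_num
    ring
  ext i j
  fin_cases i <;> fin_cases j <;>
    simp [chargedSymp, translD, hb, Matrix.mul_apply, dotProduct, Fin.sum_univ_succ,
      Matrix.vecHead, Matrix.vecTail] <;>
    linarith [key]
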